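/- arXiv:1010.5106 — 8 statements merged into one kernel-verified Lean document; each statement's English description precedes it below -/
import Mathlib

section
/- For positive integers m, p with 0 < p < m, and k ≥ 2, set a = (m-p)/p. For λ > 0, let b(λ) = p*λ^2 + (m-p)/λ^2 and t(λ) = p*λ - (m-p)/λ. Then b(λ)^2 - m*b(λ) - (k-2)*t(λ)^2 = 0 if and only if (λ^2 - a) * (λ^6 - (k-1)λ^4 + (k-1)a*λ^2 - a) = 0. -/
theorem clifford_kHarmonic_mul_pow_four {K : Type*} [Field K] {m p k l : K}
    (hp : p ≠ 0) (hl : l ≠ 0) :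
    ((p * l ^ 2 + (m - p) / l ^ 2) ^ 2 - m * (p * l ^ 2 + (m - p) / l ^ 2)
        - (k - 2) * (p * l - (m - p) / l) ^ 2) * l ^ 4 =
      p ^ 2 * ((l ^ 2 - (m - p) / p) *
        (l ^ 6 - (k - 1) * l ^ 4 + (k - 1) * ((m - p) / p) * l ^ 2 - (m - p) / p)) := by
  field_simp
  ring

theorem clifford_kHarmonic_iff {K : Type*} [Field K] {m p k l : K}
    (hp : p ≠ 0) (hl : l ≠ 0) :
    (p * l ^ 2 + (m - p) / l ^ 2) ^ 2 - m * (p * l ^ 2 + (m - p) / l ^ 2)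
        - (k - 2) * (p * l - (m - p) / l) ^ 2 = 0 ↔
      (l ^ 2 - (m - p) / p) *
        (l ^ 6 - (k - 1) * l ^ 4 + (k - 1) * ((m - p) / p) * l ^ 2 - (m - p) / p) = 0 := by
  rw [← mul_left_inj' (pow_ne_zero 4 hl), zero_mul, clifford_kHarmonic_mul_pow_four hp hl,
    mul_eq_zero, or_iff_right (pow_ne_zero 2 hp)]

theorem stmt_1_general (m p : ℕ) (hp : 0 < p) (k : ℕ)
    (l : ℝ) (hl : 0 < l)
    (a b t : ℝ)
    (ha : a = ((m : ℝ) - p) / p)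
    (hb : b = (p : ℝ) * l ^ 2 + ((m : ℝ) - p) / l ^ 2)
    (ht : t = (p : ℝ) * l - ((m : ℝ) - p) / l) :
    b ^ 2 - (m : ℝ) * b - ((k : ℝ) - 2) * t ^ 2 = 0 ↔
      (l ^ 2 - a) * (l ^ 6 - ((k : ℝ) - 1) * l ^ 4 + ((k : ℝ) - 1) * a * l ^ 2 - a) = 0 := by
  subst ha hb ht
  exact clifford_kHarmonic_iff (by positivity) hl.ne'

/-- Factorization of the k-harmonic condition for the Clifford torus (Theorem 3.8 context) -/
theorem stmt_1 (m p : ℕ) (hp : 0 < p) (hpm : p < m) (k : ℕ) (hk : 2 ≤ k)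
    (l : ℝ) (hl : 0 < l)
    (a b t : ℝ)
    (ha : a = ((m : ℝ) - p) / p)
    (hb : b = (p : ℝ) * l ^ 2 + ((m : ℝ) - p) / l ^ 2)
    (ht : t = (p : ℝ) * l - ((m : ℝ) - p) / l) :
    b ^ 2 - (m : ℝ) * b - ((k : ℝ) - 2) * t ^ 2 = 0 ↔
      (l ^ 2 - a) * (l ^ 6 - ((k : ℝ) - 1) * l ^ 4 + ((k : ℝ) - 1) * a * l ^ 2 - a) = 0 :=
  stmt_1_general m p hp k l hl a b t ha hb ht
end

section
/- Let n₁, n₂ be positive integers, n = n₁ + n₂, and r₁, r₂ > 0 with r₁² + r₂² = 1. Set B = (r₂²/r₁²)n₁ + (r₁²/r₂²)n₂ and T = (r₁/r₂)n₂ - (r₂/r₁)n₁. If n₁ = n₂ and k ∈ {2,3,4}, then B² - n·B - (k-2)·T² = 0 together with T ≠ 0 has no solution (r₁, r₂). -/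
/-!
With `n₁ = n₂ = m`, `u = r₂ / r₁` and `v = r₁ / r₂` one has `u v = 1`, `B = (u² + v²) m` and
`T = (v - u) m`. Since `u² + v² = (v - u)² + 2`, the equation factors as
`B² - n B - (k - 2) T² = T² ((v - u)² + 4 - k)`; for `k ≤ 4` the second factor is positive,
because `T ≠ 0` forces `v ≠ u`.
-/

theorem sq_sub_mul_sub_mul_sq_eq_of_mul_eq_one {u v : ℝ} (m c : ℝ) (huv : u * v = 1) :
    (u ^ 2 * m + v ^ 2 * m) ^ 2 - (m + m) * (u ^ 2 * m + v ^ 2 * m) - c * (v * m - u * m) ^ 2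
      = (v * m - u * m) ^ 2 * ((v - u) ^ 2 + 2 - c) := by
  linear_combination 2 * m ^ 2 * (u ^ 2 + v ^ 2 + (v - u) ^ 2) * huv

theorem sq_sub_mul_sub_mul_sq_ne_zero_of_mul_eq_one {u v m c : ℝ} (huv : u * v = 1)
    (hc : c ≤ 2) (hT : v * m - u * m ≠ 0) :
    (u ^ 2 * m + v ^ 2 * m) ^ 2 - (m + m) * (u ^ 2 * m + v ^ 2 * m) - c * (v * m - u * m) ^ 2
      ≠ 0 := by
  rw [sq_sub_mul_sub_mul_sq_eq_of_mul_eq_one m c huv]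
  have hvu : v - u ≠ 0 := left_ne_zero_of_mul (sub_mul v u m ▸ hT)
  have hfactor : 0 < (v - u) ^ 2 + 2 - c := by linarith [sq_pos_of_ne_zero hvu]
  exact mul_ne_zero (pow_ne_zero 2 hT) hfactor.ne'

theorem stmt_8_general (n₁ n₂ : ℕ) (heq : n₁ = n₂)
    (n : ℕ) (hn : n = n₁ + n₂) (k : ℕ) (hk : k = 2 ∨ k = 3 ∨ k = 4) :
    ¬ ∃ r₁ r₂ : ℝ, 0 < r₁ ∧ 0 < r₂ ∧ r₁ ^ 2 + r₂ ^ 2 = 1 ∧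
      ((r₂ ^ 2 / r₁ ^ 2 * n₁ + r₁ ^ 2 / r₂ ^ 2 * n₂) ^ 2
        - (n : ℝ) * (r₂ ^ 2 / r₁ ^ 2 * n₁ + r₁ ^ 2 / r₂ ^ 2 * n₂)
        - ((k : ℝ) - 2) * (r₁ / r₂ * n₂ - r₂ / r₁ * n₁) ^ 2 = 0) ∧
      (r₁ / r₂ * n₂ - r₂ / r₁ * n₁ ≠ 0) := by
  subst heq hn
  rintro ⟨r₁, r₂, hr₁, hr₂, -, hEq, hT⟩
  have huv : r₂ / r₁ * (r₁ / r₂) = 1 := by field_simp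
  have hk : (k : ℝ) - 2 ≤ 2 := by rcases hk with rfl | rfl | rfl <;> norm_num
  rw [← div_pow, ← div_pow, Nat.cast_add] at hEq
  exact sq_sub_mul_sub_mul_sq_ne_zero_of_mul_eq_one huv hk hT hEq

/-- Corollary 4.8, case 1 -/
theorem stmt_8 (n₁ n₂ : ℕ) (hn₁ : 0 < n₁) (hn₂ : 0 < n₂) (heq : n₁ = n₂)
    (n : ℕ) (hn : n = n₁ + n₂) (k : ℕ) (hk : k = 2 ∨ k = 3 ∨ k = 4) :
    ¬ ∃ r₁ r₂ : ℝ, 0 < r₁ ∧ 0 < r₂ ∧ r₁ ^ 2 + r₂ ^ 2 = 1 ∧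
      ((r₂ ^ 2 / r₁ ^ 2 * n₁ + r₁ ^ 2 / r₂ ^ 2 * n₂) ^ 2
        - (n : ℝ) * (r₂ ^ 2 / r₁ ^ 2 * n₁ + r₁ ^ 2 / r₂ ^ 2 * n₂)
        - ((k : ℝ) - 2) * (r₁ / r₂ * n₂ - r₂ / r₁ * n₁) ^ 2 = 0) ∧
      (r₁ / r₂ * n₂ - r₂ / r₁ * n₁ ≠ 0) :=
  stmt_8_general n₁ n₂ heq n hn k hk
end

section
/- Let n₁ = n₂ = q be a positive integer, n = 2q, k ≥ 5 an integer, and r₁, r₂ > 0 with r₁² + r₂² = 1. Set B = (r₂²/r₁²)q + (r₁²/r₂²)q and T = (r₁/r₂)q - (r₂/r₁)q. Then B² - nB - (k-2)T² = 0 with T ≠ 0 holds if and only if {r₁², r₂²} = {(1 + √((k-4)/k))/2, (1 - √((k-4)/k))/2}. -/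
/-!
Put `x = r₁²`, `y = r₂²` and `u = xy`, so that `x + y = 1` and `(x - y)² = 1 - 4u`. Then
`B = q (1 - 2u) / u` and `T² = q² (x - y)² / u`, and clearing denominators factors the
equation as `q² (x - y)² (1 - k u) / u² = 0`. Since `T ≠ 0` means exactly `x ≠ y`, the
condition reduces to `xy = 1/k`, and `x, y` are then the two roots of `t² - t + 1/k`,
whose discriminant is `(k - 4)/k`.
-/

lemma div_mul_sub_div_mul_eq {a b : ℝ} (ha : a ≠ 0) (hb : b ≠ 0) (c : ℝ) :
    a / b * c - b / a * c = c * (a ^ 2 - b ^ 2) / (a * b) := by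
  field_simp

lemma sq_sub_two_mul_sub_mul_eq_of_add_eq_one {x y : ℝ} (hx : x ≠ 0) (hy : y ≠ 0)
    (hxy : x + y = 1) (q k : ℝ) :
    (y / x * q + x / y * q) ^ 2 - 2 * q * (y / x * q + x / y * q)
        - (k - 2) * (q ^ 2 * (x - y) ^ 2 / (x * y))
      = q ^ 2 * (x - y) ^ 2 * (1 - k * (x * y)) / (x * y) ^ 2 := by
  obtain rfl : y = 1 - x := by linarith
  field_simp
  ring

lemma sub_ne_zero_iff_of_add_eq_one {x y : ℝ} (h : x + y = 1) : x - y ≠ 0 ↔ 4 * (x * y) ≠ 1 := by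
  have hsq : (x - y) ^ 2 = 1 - 4 * (x * y) := by linear_combination (x + y + 1) * h
  rw [← pow_ne_zero_iff two_ne_zero, hsq, sub_ne_zero, ne_comm]

lemma factor_eq_zero_and_sub_ne_zero_iff {x y c k : ℝ} (hxy : x + y = 1) (hc : c ≠ 0)
    (hu : x * y ≠ 0) (hk₀ : k ≠ 0) (hk₄ : k ≠ 4) :
    (c * (x - y) ^ 2 * (1 - k * (x * y)) / (x * y) ^ 2 = 0 ∧ x - y ≠ 0) ↔ x * y = 1 / k := by
  rw [eq_div_iff hk₀]
  constructor
  · rintro ⟨h0, hd⟩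
    have hku : 1 - k * (x * y) = 0 := by simpa [hc, hd, hu] using h0
    linarith
  · intro hu'
    have hd : x - y ≠ 0 := by
      rw [sub_ne_zero_iff_of_add_eq_one hxy, mul_comm]
      exact fun h => hk₄ (mul_left_cancel₀ hu (hu'.trans h.symm))
    exact ⟨by simp [mul_comm k, hu'], hd⟩

lemma add_eq_one_and_mul_eq_iff {x y p : ℝ} (hp : 4 * p ≤ 1) :
    (x + y = 1 ∧ x * y = p) ↔
      (x = (1 + √(1 - 4 * p)) / 2 ∧ y = (1 - √(1 - 4 * p)) / 2) ∨
      (x = (1 - √(1 - 4 * p)) / 2 ∧ y = (1 + √(1 - 4 * p)) / 2) := by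
  have hs : √(1 - 4 * p) ^ 2 = 1 - 4 * p := Real.sq_sqrt (by linarith)
  constructor
  · rintro ⟨hsum, hprod⟩
    have hdiff : (x - y - √(1 - 4 * p)) * (x - y + √(1 - 4 * p)) = 0 := by
      linear_combination (x + y + 1) * hsum - 4 * hprod - hs
    rcases mul_eq_zero.mp hdiff with h | h
    · exact .inl ⟨by linarith, by linarith⟩
    · exact .inr ⟨by linarith, by linarith⟩
  · rintro (⟨rfl, rfl⟩ | ⟨rfl, rfl⟩) <;> exact ⟨by ring, by linear_combination -hs / 4⟩

/-- Corollary 4.8, case 2 -/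
theorem stmt_9 (q : ℕ) (hq : 0 < q) (n : ℕ) (hn : n = 2 * q)
    (k : ℕ) (hk : 5 ≤ k) (r₁ r₂ : ℝ) (hr₁ : 0 < r₁) (hr₂ : 0 < r₂)
    (hsum : r₁ ^ 2 + r₂ ^ 2 = 1)
    (B T : ℝ)
    (hB : B = r₂ ^ 2 / r₁ ^ 2 * q + r₁ ^ 2 / r₂ ^ 2 * q)
    (hT : T = r₁ / r₂ * q - r₂ / r₁ * q) :
    (B ^ 2 - (n : ℝ) * B - ((k : ℝ) - 2) * T ^ 2 = 0 ∧ T ≠ 0) ↔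
      ((r₁ ^ 2 = (1 + Real.sqrt (((k : ℝ) - 4) / k)) / 2 ∧
        r₂ ^ 2 = (1 - Real.sqrt (((k : ℝ) - 4) / k)) / 2) ∨
       (r₁ ^ 2 = (1 - Real.sqrt (((k : ℝ) - 4) / k)) / 2 ∧
        r₂ ^ 2 = (1 + Real.sqrt (((k : ℝ) - 4) / k)) / 2)) := by
  have hq₀ : (q : ℝ) ≠ 0 := by positivity
  have hk₀ : (k : ℝ) ≠ 0 := by positivity
  have hu : r₁ ^ 2 * r₂ ^ 2 ≠ 0 := by positivity
  have hT' : T = q * (r₁ ^ 2 - r₂ ^ 2) / (r₁ * r₂) := by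
    rw [hT, div_mul_sub_div_mul_eq hr₁.ne' hr₂.ne']
  have hpoly : B ^ 2 - (n : ℝ) * B - ((k : ℝ) - 2) * T ^ 2
      = q ^ 2 * (r₁ ^ 2 - r₂ ^ 2) ^ 2 * (1 - k * (r₁ ^ 2 * r₂ ^ 2)) / (r₁ ^ 2 * r₂ ^ 2) ^ 2 := by
    rw [← sq_sub_two_mul_sub_mul_eq_of_add_eq_one (by positivity) (by positivity) hsum, hB, hT', hn]
    push_cast
    ring
  have hTne : T ≠ 0 ↔ r₁ ^ 2 - r₂ ^ 2 ≠ 0 := by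
    rw [hT']
    simp [hq₀, hr₁.ne', hr₂.ne']
  have hk4 : (k : ℝ) ≠ 4 := by exact_mod_cast (by omega : k ≠ 4)
  rw [hpoly, hTne, factor_eq_zero_and_sub_ne_zero_iff hsum (by positivity) hu hk₀ hk4]
  have hdisc : 1 - 4 * (1 / (k : ℝ)) = ((k : ℝ) - 4) / k := by field_simp
  have hdisc_nonneg : 4 * (1 / (k : ℝ)) ≤ 1 := by
    rw [mul_one_div, div_le_one (by positivity)]
    exact_mod_cast (by omega : 4 ≤ k)
  rw [← hdisc, ← add_eq_one_and_mul_eq_iff hdisc_nonneg, and_iff_right hsum]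
end

section
/- Let k ≥ 2 and m ≥ 1 be integers. The sphere S^m(1/√k) immersed as a parallel hypersurface in S^{m+1} satisfies the k-harmonicity equation: with b = ‖B‖² = m(k-1) and t = ‖τ(φ)‖ = m√(k-1) (coming from the constant principal curvature √(k-1)), one has b² - m·b - (k-2)·t² = 0, and t ≠ 0 for k ≥ 2. -/
/-- A hypersurface whose `m` principal curvatures all equal `c` has `‖B‖² = m c²` and
`‖τ‖ = m c`; the `k`-harmonic equation holds identically once `k = c² + 1`. -/
theorem k_harmonic_eq_of_principal_curvatures_eq (m c : ℝ) :
    (m * c ^ 2) ^ 2 - m * (m * c ^ 2) - ((c ^ 2 + 1) - 2) * (m * c) ^ 2 = 0 := by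
  ring

/-- Theorem 3.7: S^m(1/√k) is a proper k-harmonic hypersphere -/
theorem stmt_12 (k m : ℕ) (hk : 2 ≤ k) (hm : 1 ≤ m)
    (b t : ℝ) (hb : b = (m : ℝ) * ((k : ℝ) - 1))
    (ht : t = (m : ℝ) * Real.sqrt ((k : ℝ) - 1)) :
    b ^ 2 - (m : ℝ) * b - ((k : ℝ) - 2) * t ^ 2 = 0 ∧ t ≠ 0 := by
  have hk_pos : (0 : ℝ) < (k : ℝ) - 1 := by
    rw [sub_pos]
    exact_mod_cast hk
  have hsq : Real.sqrt ((k : ℝ) - 1) ^ 2 = (k : ℝ) - 1 := Real.sq_sqrt hk_pos.le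
  have key := k_harmonic_eq_of_principal_curvatures_eq m (Real.sqrt ((k : ℝ) - 1))
  rw [hsq, sub_add_cancel] at key
  subst hb ht
  exact ⟨key, mul_ne_zero (Nat.cast_ne_zero.mpr (by omega)) (Real.sqrt_pos.mpr hk_pos).ne'⟩
end

section
/- Let a > 1 be a rational (or real) number, and k = 3. Then the cubic equation x³ - 2x² + 2a·x - a = 0 (x = λ²) has exactly one positive real root when its discriminant condition from the paper holds for a = 2; in particular for a = 2 (i.e., n₂ = 2n₁ case translated, or m - p = 2p), the unique positive root is x = λ² where λ is given by Cardano's formula λ² = A^{1/3} + (k² - 3a(k-1) - 2k + 1)/(9A^{1/3}) + (k-1)/3 with the A given in Corollary 3.10. -/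
/-! Under `x = t + (k - 1)/3` the cubic `x³ - (k-1)x² + (k-1)a x - a` becomes `t³ + p t + q`,
and Cardano's substitution `t = u - p/(3u)` turns that into `(u⁶ + q u³ - p³/27)/u³`, which
vanishes when `u³ = -q/2 + √(q²/4 + p³/27)`. The radicand in Corollary 3.10 is `108 (q²/4 + p³/27)` and
`2 · 3^{3/2} = √108`, so its `A` is exactly this `u³`. For `a = 2`, `k = 3` we get `p = 8/3 > 0`,
so `A > 0` and the cubic is strictly increasing and negative at `0`: its only real root is the
Cardano one, and it is positive. -/

open Real

theorem depressed_cubic_eq_zero_of_resolvent {K : Type*} [Field K] [CharZero K] {p q u : K}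
    (hu : u ≠ 0) (h : u ^ 6 + q * u ^ 3 - p ^ 3 / 27 = 0) :
    (u - p / (3 * u)) ^ 3 + p * (u - p / (3 * u)) + q = 0 := by
  field_simp
  linear_combination 27 * h

theorem strictMono_depressed_cubic {R : Type*} [Ring R] [LinearOrder R] [IsStrictOrderedRing R]
    {p : R} (hp : 0 ≤ p) (q : R) : StrictMono fun t : R => t ^ 3 + p * t + q :=
  ((Odd.strictMono_pow (by decide)).add_monotone fun _ _ h => mul_le_mul_of_nonneg_left h hp)
    |>.add_const q

theorem cardano_cube_pos {p : ℝ} (q : ℝ) (hp : 0 < p) :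
    0 < -q / 2 + √(q ^ 2 / 4 + p ^ 3 / 27) := by
  have : q / 2 < √(q ^ 2 / 4 + p ^ 3 / 27) :=
    lt_sqrt_of_sq_lt (by nlinarith [pow_pos hp 3])
  linarith

noncomputable def cardanoP (a k : ℝ) : ℝ := (k - 1) * a - (k - 1) ^ 2 / 3

noncomputable def cardanoQ (a k : ℝ) : ℝ := -2 * (k - 1) ^ 3 / 27 + (k - 1) ^ 2 * a / 3 - a

theorem cubic_eq_depressed (a k x : ℝ) :
    x ^ 3 - (k - 1) * x ^ 2 + (k - 1) * a * x - a =
      (x - (k - 1) / 3) ^ 3 + cardanoP a k * (x - (k - 1) / 3) + cardanoQ a k := by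
  unfold cardanoP cardanoQ
  ring

theorem cardano_radicand_eq (a k : ℝ) :
    -a * (a * k ^ 4 - 4 * (a ^ 2 + a + 1) * k ^ 3 + 12 * (a + 1) ^ 2 * k ^ 2
        - 4 * (3 * a ^ 2 + 10 * a + 3) * k + 4 * (a - 1) ^ 2) =
      108 * (cardanoQ a k ^ 2 / 4 + cardanoP a k ^ 3 / 27) := by
  unfold cardanoP cardanoQ
  ring

theorem two_mul_three_rpow_three_halves : 2 * (3 : ℝ) ^ ((3 : ℝ) / 2) = √108 := by
  have h : ((3 : ℝ) ^ ((3 : ℝ) / 2)) ^ 2 = 27 := by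
    rw [← rpow_natCast, ← rpow_mul (by norm_num)]
    norm_num
  rw [eq_comm, sqrt_eq_iff_mul_self_eq (by norm_num) (by positivity)]
  linear_combination -4 * h

theorem cardanoA_eq (a k : ℝ) :
    √(-a * (a * k ^ 4 - 4 * (a ^ 2 + a + 1) * k ^ 3 + 12 * (a + 1) ^ 2 * k ^ 2
          - 4 * (3 * a ^ 2 + 10 * a + 3) * k + 4 * (a - 1) ^ 2)) / (2 * 3 ^ ((3 : ℝ) / 2))
        - (-2 * k ^ 3 + 9 * a * (k ^ 2 - 2 * k - 2) + 2 * (3 * k ^ 2 - 3 * k + 1)) / 54 =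
      -cardanoQ a k / 2 + √(cardanoQ a k ^ 2 / 4 + cardanoP a k ^ 3 / 27) := by
  rw [cardano_radicand_eq, two_mul_three_rpow_three_halves, sqrt_mul (by norm_num),
    mul_div_cancel_left₀ _ (by positivity)]
  unfold cardanoQ
  ring

theorem cubic_eq_zero_of_cardano {a k A x : ℝ}
    (hD : 0 ≤ -a * (a * k ^ 4 - 4 * (a ^ 2 + a + 1) * k ^ 3 + 12 * (a + 1) ^ 2 * k ^ 2
          - 4 * (3 * a ^ 2 + 10 * a + 3) * k + 4 * (a - 1) ^ 2))
    (hA : A = √(-a * (a * k ^ 4 - 4 * (a ^ 2 + a + 1) * k ^ 3 + 12 * (a + 1) ^ 2 * k ^ 2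
          - 4 * (3 * a ^ 2 + 10 * a + 3) * k + 4 * (a - 1) ^ 2)) / (2 * 3 ^ ((3 : ℝ) / 2))
        - (-2 * k ^ 3 + 9 * a * (k ^ 2 - 2 * k - 2) + 2 * (3 * k ^ 2 - 3 * k + 1)) / 54)
    (hA0 : 0 < A)
    (hx : x = A ^ ((1 : ℝ) / 3) + (k ^ 2 - 3 * a * (k - 1) - 2 * k + 1) / (9 * A ^ ((1 : ℝ) / 3))
        + (k - 1) / 3) :
    x ^ 3 - (k - 1) * x ^ 2 + (k - 1) * a * x - a = 0 := by
  set u := A ^ ((1 : ℝ) / 3)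
  have hu3 : u ^ 3 = A := by
    rw [show u = A ^ (((3 : ℕ) : ℝ)⁻¹) by norm_num [u]]
    exact rpow_inv_natCast_pow hA0.le (by norm_num)
  have hu0 : u ≠ 0 := (rpow_pos_of_pos hA0 _).ne'
  rw [cardano_radicand_eq] at hD
  rw [cardanoA_eq] at hA
  have hx' : x - (k - 1) / 3 = u - cardanoP a k / (3 * u) := by
    rw [hx, cardanoP]
    ring
  rw [cubic_eq_depressed, hx']
  refine depressed_cubic_eq_zero_of_resolvent hu0 ?_
  have hsq := sq_sqrt (nonneg_of_mul_nonneg_right hD (by norm_num : (0 : ℝ) < 108))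
  rw [show u ^ 6 = (u ^ 3) ^ 2 by ring, hu3, hA]
  linear_combination hsq

theorem strictMono_cubic {a k : ℝ} (hp : 0 ≤ cardanoP a k) :
    StrictMono fun x : ℝ => x ^ 3 - (k - 1) * x ^ 2 + (k - 1) * a * x - a := fun x y h => by
  simpa only [cubic_eq_depressed] using
    strictMono_depressed_cubic hp _ (sub_lt_sub_right h ((k - 1) / 3))

/-- Corollary 3.10, checked for a = 2, k = 3: Cardano's formula gives the unique positive root -/
theorem stmt_13 (a : ℝ) (ha : a = 2) (k : ℕ) (hk : k = 3)
    (A : ℝ)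
    (hA : A = Real.sqrt (-a * (a * (k : ℝ) ^ 4 - 4 * (a ^ 2 + a + 1) * (k : ℝ) ^ 3
          + 12 * (a + 1) ^ 2 * (k : ℝ) ^ 2 - 4 * (3 * a ^ 2 + 10 * a + 3) * (k : ℝ)
          + 4 * (a - 1) ^ 2)) / (2 * 3 ^ ((3 : ℝ) / 2))
        - (-2 * (k : ℝ) ^ 3 + 9 * a * ((k : ℝ) ^ 2 - 2 * (k : ℝ) - 2)
          + 2 * (3 * (k : ℝ) ^ 2 - 3 * (k : ℝ) + 1)) / 54)
    (x : ℝ)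
    (hx : x = A ^ ((1 : ℝ) / 3)
        + ((k : ℝ) ^ 2 - 3 * a * ((k : ℝ) - 1) - 2 * (k : ℝ) + 1) / (9 * A ^ ((1 : ℝ) / 3))
        + ((k : ℝ) - 1) / 3) :
    0 < x ∧ x ^ 3 - 2 * x ^ 2 + 2 * a * x - a = 0 ∧
      ∀ y : ℝ, 0 < y → y ^ 3 - 2 * y ^ 2 + 2 * a * y - a = 0 → y = x := by
  subst ha hk
  have hp : 0 < cardanoP 2 (3 : ℕ) := by norm_num [cardanoP]
  have hA0 : 0 < A := by
    rw [hA, cardanoA_eq]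
    exact cardano_cube_pos _ hp
  have hroot := cubic_eq_zero_of_cardano (by norm_num) hA hA0 hx
  have hmono := strictMono_cubic hp.le
  norm_num at hroot hmono ⊢
  exact ⟨hmono.lt_iff_lt.mp (by norm_num [hroot]), hroot,
    fun y _ hy => hmono.injective (hy.trans hroot.symm)⟩
end

section
/- Let c ≥ 2 be an integer, n₁ ≥ 1, n₂ = c·n₁, n = n₁ + n₂, C = c² + 4√c(c+1) + 6c + 1, and r₁, r₂ as in Example 4.9(ii). Set B = (r₂²/r₁²)n₁ + (r₁²/r₂²)n₂ and T = (r₁/r₂)n₂ - (r₂/r₁)n₁. Then B² - nB - 2T² = 0 and T ≠ 0. -/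
/-!
With `q = √c`, the constant is `C = (q + 1)⁴`, so every cube root in the radii is a monomial in
`v = ∛(q + 1)` and `w = ∛(q - 1)`, and the radii satisfy `r₂² = a r₁²` with `a = 1 + v w (w - v)`.
Since `v³ - w³ = 2` and `v³ w³ = c - 1`, Cardano's formula shows that `a - 1` is the real root of
`x³ + 3(c - 1)x + 2(c - 1)`, and this cubic is a factor of `a² (B² - nB - 2T²) / n₁²`.
Finally `w < v` gives `a < 1`, hence `r₂ < r₁`, which forces `T > 0`.
-/

open Real

theorem pow_rpow_div_three {x : ℝ} (hx : 0 ≤ x) (m k : ℕ) :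
    (x ^ m) ^ ((k : ℝ) / 3) = (x ^ ((1 : ℝ) / 3)) ^ (m * k) := by
  rw [← rpow_natCast_mul hx, ← rpow_mul_natCast hx]
  push_cast
  ring_nf

theorem rpow_one_div_three_pow_three {x : ℝ} (hx : 0 ≤ x) : (x ^ ((1 : ℝ) / 3)) ^ 3 = x := by
  rw [← rpow_mul_natCast hx]
  norm_num

theorem rpow_div_three_sq_sub_one {q : ℝ} (hq : 1 ≤ q) (k : ℕ) :
    (q ^ 2 - 1) ^ ((k : ℝ) / 3) = ((q + 1) ^ ((1 : ℝ) / 3) * (q - 1) ^ ((1 : ℝ) / 3)) ^ k := by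
  rw [show q ^ 2 - 1 = ((q + 1) * (q - 1)) ^ 1 by ring,
    pow_rpow_div_three (by nlinarith), one_mul, mul_rpow (by linarith) (by linarith)]

theorem cardano_root {q v w : ℝ} (hv : v ^ 3 = q + 1) (hw : w ^ 3 = q - 1) :
    (v * w * (w - v)) ^ 3 + 3 * (q ^ 2 - 1) * (v * w * (w - v)) + 2 * (q ^ 2 - 1) = 0 := by
  linear_combination (v ^ 3 * w ^ 3 - (3 * (v * w * (w - v)) + 2) * v ^ 3) * hw
    + (-(v ^ 3 * w ^ 3) - (3 * (v * w * (w - v)) + 2) * (q - 1)) * hv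

theorem sq_radius_eq_mul_sq_radius {q v w r₁ r₂ : ℝ} (hv : v ^ 3 = q + 1) (hw : w ^ 3 = q - 1)
    (h₁ : r₁ ^ 2 = ((v * w) ^ 5 + (q ^ 2 + 3) * v ^ 4 + v * w * v ^ 8) / (4 * v ^ 4 * (q ^ 2 + 1)))
    (h₂ : r₂ ^ 2 = (-(v * w) ^ 5 + (3 * q ^ 2 + 1) * v ^ 4 - v * w * v ^ 8)
      / (4 * v ^ 4 * (q ^ 2 + 1))) :
    r₂ ^ 2 = (1 + v * w * (w - v)) * r₁ ^ 2 := by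
  rw [h₁, h₂, ← mul_div_assoc]
  congr 1
  linear_combination v ^ 4 * ((v ^ 4 * w ^ 2 - v ^ 3 * w ^ 3 - 2 * v ^ 2 * w + v * w ^ 2 * q
      + v * w ^ 2 + w ^ 6 - w ^ 3 * q - w ^ 3) * hv
    + (-v ^ 2 * w ^ 4 - v ^ 2 * w * q + v ^ 2 * w - 2 * v * w ^ 2 + w ^ 3 * q + w ^ 3
      - 2 * q - 2) * hw)

theorem lt_of_sq_eq_mul_sq {r₁ r₂ v w : ℝ} (hr₁ : 0 < r₁) (hw : 0 < w) (hwv : w < v)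
    (h : r₂ ^ 2 = (1 + v * w * (w - v)) * r₁ ^ 2) : r₂ < r₁ := by
  have ht : v * w * (w - v) < 0 :=
    mul_neg_of_pos_of_neg (mul_pos (hw.trans hwv) hw) (sub_neg.2 hwv)
  refine lt_of_pow_lt_pow_left₀ 2 hr₁.le ?_
  linarith [mul_neg_of_neg_of_pos ht (pow_pos hr₁ 2)]

/-- With `a = r₂² / r₁²` and `n₂ = c n₁`, one has
`a² (B² - nB - 2T²) = n₁² (a - c) ((a - 1)³ + 3(c - 1)(a - 1) + 2(c - 1))`. -/
theorem harmonicity_defect_eq_zero_of_cubic {r₁ r₂ a c n₁ : ℝ} (hr₁ : r₁ ≠ 0) (hr₂ : r₂ ≠ 0)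
    (ha : r₂ ^ 2 = a * r₁ ^ 2) (hcubic : (a - 1) ^ 3 + 3 * (c - 1) * (a - 1) + 2 * (c - 1) = 0) :
    (r₂ ^ 2 / r₁ ^ 2 * n₁ + r₁ ^ 2 / r₂ ^ 2 * (c * n₁)) ^ 2
      - (n₁ + c * n₁) * (r₂ ^ 2 / r₁ ^ 2 * n₁ + r₁ ^ 2 / r₂ ^ 2 * (c * n₁))
      - 2 * (r₁ / r₂ * (c * n₁) - r₂ / r₁ * n₁) ^ 2 = 0 := by
  have ha₀ : a ≠ 0 := by
    rintro rfl
    exact hr₂ (pow_eq_zero_iff two_ne_zero |>.mp (by simpa using ha))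
  have hratio : r₂ ^ 2 / r₁ ^ 2 = a := by rw [ha]; field_simp
  have hratio' : r₁ ^ 2 / r₂ ^ 2 = a⁻¹ := by rw [← hratio, inv_div]
  have hT : (r₁ / r₂ * (c * n₁) - r₂ / r₁ * n₁) ^ 2
      = r₁ ^ 2 / r₂ ^ 2 * (c * n₁) ^ 2 + r₂ ^ 2 / r₁ ^ 2 * n₁ ^ 2 - 2 * c * n₁ ^ 2 := by
    field_simp
    ring
  rw [hT, hratio, hratio']
  field_simp
  linear_combination n₁ ^ 2 * (a - c) * hcubic

theorem div_mul_sub_div_mul_pos {r₁ r₂ c n₁ : ℝ} (hr₂ : 0 < r₂) (hr : r₂ < r₁) (hc : 1 ≤ c)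
    (hn₁ : 0 < n₁) :
    0 < r₁ / r₂ * (c * n₁) - r₂ / r₁ * n₁ := by
  have hr₁ : 0 < r₁ := hr₂.trans hr
  have hlt : r₂ / r₁ < 1 := (div_lt_one hr₁).2 hr
  have hgt : 1 < r₁ / r₂ := (one_lt_div hr₂).2 hr
  have hcn : n₁ ≤ c * n₁ := le_mul_of_one_le_left hn₁.le hc
  nlinarith

/-- Example 4.9 (ii): the explicit radii give a proper 4-harmonic submersion -/
theorem stmt_16 (c : ℕ) (hc : 2 ≤ c) (n₁ : ℕ) (hn₁ : 1 ≤ n₁)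
    (n₂ n : ℕ) (hn₂ : n₂ = c * n₁) (hn : n = n₁ + n₂)
    (C : ℝ) (hC : C = (c : ℝ) ^ 2 + 4 * Real.sqrt c * ((c : ℝ) + 1) + 6 * c + 1)
    (r₁ r₂ : ℝ) (hr₁ : 0 < r₁) (hr₂ : 0 < r₂)
    (h1 : r₁ ^ 2 = (((c : ℝ) - 1) ^ ((5 : ℝ) / 3) + ((c : ℝ) + 3) * C ^ ((1 : ℝ) / 3)
        + ((c : ℝ) - 1) ^ ((1 : ℝ) / 3) * C ^ ((2 : ℝ) / 3))
        / (4 * C ^ ((1 : ℝ) / 3) * ((c : ℝ) + 1)))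
    (h2 : r₂ ^ 2 = (-(((c : ℝ) - 1) ^ ((5 : ℝ) / 3)) + (3 * (c : ℝ) + 1) * C ^ ((1 : ℝ) / 3)
        - ((c : ℝ) - 1) ^ ((1 : ℝ) / 3) * C ^ ((2 : ℝ) / 3))
        / (4 * C ^ ((1 : ℝ) / 3) * ((c : ℝ) + 1)))
    (B T : ℝ)
    (hB : B = r₂ ^ 2 / r₁ ^ 2 * n₁ + r₁ ^ 2 / r₂ ^ 2 * n₂)
    (hT : T = r₁ / r₂ * n₂ - r₂ / r₁ * n₁) :
    B ^ 2 - (n : ℝ) * B - 2 * T ^ 2 = 0 ∧ T ≠ 0 := by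
  have hc₁ : (1 : ℝ) < c := by exact_mod_cast hc
  set q := √(c : ℝ)
  have hqc : q ^ 2 = c := sq_sqrt (Nat.cast_nonneg c)
  have hq : 1 < q := lt_sqrt_of_sq_lt (by simpa using hc₁)
  have hC' : C = (q + 1) ^ 4 := by rw [hC, ← hqc]; ring
  set v := (q + 1) ^ ((1 : ℝ) / 3)
  set w := (q - 1) ^ ((1 : ℝ) / 3)
  have hC₁ : C ^ ((1 : ℝ) / 3) = v ^ 4 := by
    simpa only [hC', Nat.cast_ofNat, Nat.cast_one, mul_one] using
      pow_rpow_div_three (x := q + 1) (by linarith) 4 1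
  have hC₂ : C ^ ((2 : ℝ) / 3) = v ^ 8 := by
    simpa only [hC', Nat.cast_ofNat, Nat.reduceMul] using
      pow_rpow_div_three (x := q + 1) (by linarith) 4 2
  have hc₁₃ : ((c : ℝ) - 1) ^ ((1 : ℝ) / 3) = v * w := by
    simpa only [hqc, Nat.cast_one, pow_one] using rpow_div_three_sq_sub_one hq.le 1
  have hc₅₃ : ((c : ℝ) - 1) ^ ((5 : ℝ) / 3) = (v * w) ^ 5 := by
    simpa only [hqc, Nat.cast_ofNat] using rpow_div_three_sq_sub_one hq.le 5
  rw [hC₁, hC₂, hc₁₃, hc₅₃, ← hqc] at h1 h2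
  have hv : v ^ 3 = q + 1 := rpow_one_div_three_pow_three (by linarith)
  have hw : w ^ 3 = q - 1 := rpow_one_div_three_pow_three (by linarith)
  have hratio := sq_radius_eq_mul_sq_radius hv hw h1 h2
  have hr : r₂ < r₁ := lt_of_sq_eq_mul_sq hr₁ (rpow_pos_of_pos (by linarith) _)
    (rpow_lt_rpow (by linarith) (by linarith) (by norm_num)) hratio
  subst hB hT hn hn₂
  push_cast
  refine ⟨harmonicity_defect_eq_zero_of_cubic hr₁.ne' hr₂.ne' hratio ?_,
    (div_mul_sub_div_mul_pos hr₂ hr hc₁.le (by exact_mod_cast hn₁)).ne'⟩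
  simpa [← hqc] using cardano_root hv hw
end

section
/- Let x > 0 and a > 0 with x ≠ a, and suppose x³ - (k-1)x² + (k-1)a·x - a = 0 for some integer k ≥ 2. Then, with p ≥ 1, m-p ≥ 1, a = (m-p)/p and λ = √x, the immersion data b = pλ² + (m-p)/λ² and t = |pλ - (m-p)/λ| satisfy b² - m·b - (k-2)t² = 0 and t ≠ 0. -/
/-- Theorem 3.8: proper k-harmonicity of M_p^m(λ) -/
theorem stmt_17 (m p : ℕ) (hp : 1 ≤ p) (hpm : p < m) (k : ℕ) (hk : 2 ≤ k)
    (a : ℝ) (ha : a = ((m : ℝ) - p) / p)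
    (x : ℝ) (hx : 0 < x) (hxa : x ≠ a)
    (hroot : x ^ 3 - ((k : ℝ) - 1) * x ^ 2 + ((k : ℝ) - 1) * a * x - a = 0)
    (l : ℝ) (hl : l = Real.sqrt x)
    (b t : ℝ)
    (hb : b = (p : ℝ) * l ^ 2 + ((m : ℝ) - p) / l ^ 2)
    (ht : t = |(p : ℝ) * l - ((m : ℝ) - p) / l|) :
    b ^ 2 - (m : ℝ) * b - ((k : ℝ) - 2) * t ^ 2 = 0 ∧ t ≠ 0 := by
  have hp0 : (0:ℝ) < p := by exact_mod_cast hp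
  have hpm' : (p:ℝ) < m := by exact_mod_cast hpm
  have hq : (0:ℝ) < (m:ℝ) - p := by linarith
  have hl0 : 0 < l := by rw [hl]; exact Real.sqrt_pos.mpr hx
  have hxl : l ^ 2 = x := by rw [hl, Real.sq_sqrt hx.le]
  subst ha
  have hroot' : (p:ℝ) * x ^ 3 - ((k:ℝ) - 1) * p * x ^ 2 + ((k:ℝ) - 1) * ((m:ℝ) - p) * x - ((m:ℝ) - p) = 0 := by
    field_simp at hroot
    linarith
  have hlx : (p:ℝ) * l - ((m:ℝ) - p) / l = ((p:ℝ) * x - ((m:ℝ) - p)) / l := by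
    field_simp
    linear_combination (p:ℝ) * hxl
  have ht2' : t ^ 2 = ((p:ℝ) * x - ((m:ℝ) - p)) ^ 2 / x := by
    rw [ht, sq_abs, hlx, div_pow, hxl]
  have hbx : b * x = (p:ℝ) * x ^ 2 + ((m:ℝ) - p) := by
    rw [hb, hxl]
    field_simp
  have htx : t ^ 2 * x = ((p:ℝ) * x - ((m:ℝ) - p)) ^ 2 := by
    rw [ht2']
    field_simp
  constructor
  · have key : x ^ 2 * (b ^ 2 - (m:ℝ) * b - ((k:ℝ) - 2) * t ^ 2) = 0 := by
      linear_combination (b * x + (p:ℝ) * x ^ 2 + ((m:ℝ) - p) - (m:ℝ) * x) * hbx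
        - (((k:ℝ) - 2) * x) * htx + ((p:ℝ) * x - ((m:ℝ) - p)) * hroot'
    rcases mul_eq_zero.mp key with h | h
    · exact absurd h (pow_ne_zero 2 hx.ne')
    · exact h
  · rw [ht, abs_ne_zero, hlx]
    intro h
    apply hxa
    rw [div_eq_zero_iff] at h
    rcases h with h | h
    · rw [eq_div_iff hp0.ne']
      linarith
    · exact absurd h hl0.ne'
end

section
/- For every integer k ≥ 2, the point a = 1/√k, b = √((k-1)/k) lies on the unit circle a² + b² = 1, satisfies a ∈ (0,1), and the associated c with c² = a² + a⁴/b² equals 1/√(k-1); moreover n²/c² · (1/c)·(1-(k-1)c²) = 0 while n/c ≠ 0, showing the composed map φ: M → S^{n+1} is proper k-harmonic but not harmonic. -/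
/-!
With `a = 1/√k` and `b = √((k-1)/k)` on the unit circle, `a² + a⁴/b² = a²(a² + b²)/b² = a²/b²`,
so `c² = 1/(k-1)` and the factor `1 - (k-1)c²` of the `k`-tension field vanishes, while the
tension field itself carries the nonzero factor `n/c`.
-/

open Real

lemma sq_add_pow_four_div_sq {a b : ℝ} (hab : a ^ 2 + b ^ 2 = 1) (hb : b ≠ 0) :
    a ^ 2 + a ^ 4 / b ^ 2 = a ^ 2 / b ^ 2 := by
  field_simp
  linear_combination a ^ 2 * hab

lemma eq_one_div_sqrt_of_sq_eq_one_div {c x : ℝ} (hc : 0 < c) (h : c ^ 2 = 1 / x) :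
    c = 1 / √x := by
  rw [← sqrt_sq hc.le, h, one_div, sqrt_inv, one_div]

section

variable {k : ℝ}

lemma one_div_sqrt_sq_add_sqrt_sub_one_div_sq (hk : 1 ≤ k) :
    (1 / √k) ^ 2 + √((k - 1) / k) ^ 2 = 1 := by
  have hk0 : 0 < k := by linarith
  rw [div_pow, one_pow, sq_sqrt hk0.le, sq_sqrt (div_nonneg (by linarith) hk0.le)]
  field_simp
  ring

lemma one_div_sqrt_lt_one (hk : 1 < k) : 1 / √k < 1 := by
  rw [div_lt_one (sqrt_pos.2 (by linarith))]
  exact (lt_sqrt zero_le_one).2 (by simpa using hk)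

lemma one_div_sqrt_sq_div_sqrt_sub_one_div_sq (hk : 1 < k) :
    (1 / √k) ^ 2 / √((k - 1) / k) ^ 2 = 1 / (k - 1) := by
  have hk0 : 0 < k := by linarith
  have hk1 : 0 < k - 1 := by linarith
  rw [div_pow, one_pow, sq_sqrt hk0.le, sq_sqrt (div_pos hk1 hk0).le]
  field_simp

end

/-- Theorem 4.4, computational content -/
theorem stmt_19 (k : ℕ) (hk : 2 ≤ k) (n : ℕ) (hn : 0 < n)
    (a b c : ℝ) (ha : a = 1 / Real.sqrt k)
    (hb : b = Real.sqrt (((k : ℝ) - 1) / k))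
    (hcpos : 0 < c) (hc : c ^ 2 = a ^ 2 + a ^ 4 / b ^ 2) :
    a ^ 2 + b ^ 2 = 1 ∧ 0 < a ∧ a < 1 ∧ c = 1 / Real.sqrt ((k : ℝ) - 1) ∧
      (n : ℝ) ^ 2 / c ^ 2 * ((1 / c) * (1 - ((k : ℝ) - 1) * c ^ 2)) = 0 ∧
      (n : ℝ) / c ≠ 0 := by
  have hk1 : (1 : ℝ) < k := by exact_mod_cast hk
  have hab : a ^ 2 + b ^ 2 = 1 := by
    rw [ha, hb]; exact one_div_sqrt_sq_add_sqrt_sub_one_div_sq hk1.le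
  have hb0 : b ≠ 0 := by
    rw [hb]; exact (sqrt_pos.2 (div_pos (by linarith) (by linarith))).ne'
  have hc2 : c ^ 2 = 1 / ((k : ℝ) - 1) := by
    rw [hc, sq_add_pow_four_div_sq hab hb0, ha, hb, one_div_sqrt_sq_div_sqrt_sub_one_div_sq hk1]
  have hfactor : 1 - ((k : ℝ) - 1) * c ^ 2 = 0 := by
    rw [hc2, mul_one_div_cancel (sub_ne_zero.2 hk1.ne'), sub_self]
  refine ⟨hab, by rw [ha]; positivity, ha ▸ one_div_sqrt_lt_one hk1,
    eq_one_div_sqrt_of_sq_eq_one_div hcpos hc2, by rw [hfactor, mul_zero, mul_zero], ?_⟩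
  have : (0 : ℝ) < n := by exact_mod_cast hn
  positivity
end
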